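/- For the function G(t₁,t₂,t₃) = −(π⁴/(t₁³t₂³t₃³))·[9t₁⁴t₂⁴t₃⁴ + 27·Sym(t₁⁴t₂⁴) − 42·Sym(t₁⁴t₂⁴t₃²) − 42·Sym(t₁⁴t₂²t₃²)] on (0,∞)³ (where Sym denotes symmetrization of the monomial over the 3 variables with normalizing factor 1/3!), the points (1,1,1) and (√(5/9), √(5/9), √(5/9)) are critical points, with values G(1,1,1) = 48π⁴ and G(√(5/9),√(5/9),√(5/9)) = (64√5/3)π⁴. -/

import Mathlib

/-!
By the symmetry of `G` it suffices to differentiate in the first variable. On the line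
`s ↦ G(s, t, t)` the function is a Laurent polynomial in `s`, and its derivative at the diagonal
point `s = t` is `-π⁴ (9t² - 5)(t² - 1) / t²`, which vanishes exactly for `t² = 1` and `t² = 5/9`.
On the diagonal `G(t, t, t) = π⁴ (42t + 15/t - 9t³)`, which gives the two values.
-/

open Real

/-- Symmetrization over the three variables of the monomial `x^a y^b z^c`
with normalizing factor `1/3!`. -/
noncomputable def sym3 (a b c : ℕ) (x y z : ℝ) : ℝ :=
  (1/6) * ∑ σ : Equiv.Perm (Fin 3),
    (![x, y, z] (σ 0))^a * (![x, y, z] (σ 1))^b * (![x, y, z] (σ 2))^c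

/-- The 4-torus energy function in ratio variables. -/
noncomputable def Gtorus (t₁ t₂ t₃ : ℝ) : ℝ :=
  -(π^4/(t₁^3*t₂^3*t₃^3)) *
    (9*t₁^4*t₂^4*t₃^4 + 27*sym3 4 4 0 t₁ t₂ t₃
      - 42*sym3 4 4 2 t₁ t₂ t₃ - 42*sym3 4 2 2 t₁ t₂ t₃)

lemma sym3_eq (a b c : ℕ) (x y z : ℝ) :
    sym3 a b c x y z = (1/6) * (x^a*y^b*z^c + x^a*z^b*y^c + y^a*x^b*z^c
      + z^a*x^b*y^c + y^a*z^b*x^c + z^a*y^b*x^c) := by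
  rw [sym3, show (Finset.univ : Finset (Equiv.Perm (Fin 3))) =
    {1, Equiv.swap 1 2, Equiv.swap 0 1, Equiv.swap 0 1 * Equiv.swap 1 2,
     Equiv.swap 1 2 * Equiv.swap 0 1, Equiv.swap 0 2} from by decide]
  rw [Finset.sum_insert (by decide), Finset.sum_insert (by decide),
    Finset.sum_insert (by decide), Finset.sum_insert (by decide),
    Finset.sum_insert (by decide), Finset.sum_singleton]
  norm_num [Equiv.swap_apply_def, Equiv.Perm.mul_apply, Fin.ext_iff]
  simp only [Matrix.cons_val_two, Matrix.tail_cons, Matrix.head_cons]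
  ring

lemma Gtorus_eq (x y z : ℝ) : Gtorus x y z = -(π^4/(x^3*y^3*z^3)) *
    (9*x^4*y^4*z^4 + 9*(x^4*y^4 + x^4*z^4 + y^4*z^4)
      - 14*(x^4*y^4*z^2 + x^4*z^4*y^2 + y^4*z^4*x^2)
      - 14*(x^4*y^2*z^2 + y^4*x^2*z^2 + z^4*x^2*y^2)) := by
  rw [Gtorus, sym3_eq, sym3_eq, sym3_eq]; ring

lemma Gtorus_swap₁₂ (x y z : ℝ) : Gtorus y x z = Gtorus x y z := by
  rw [Gtorus_eq, Gtorus_eq]; ring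

lemma Gtorus_swap₁₃ (x y z : ℝ) : Gtorus z y x = Gtorus x y z := by
  rw [Gtorus_eq, Gtorus_eq]; ring

lemma Gtorus_apply_self_self (s t : ℝ) (ht : t ≠ 0) :
    Gtorus s t t = -π^4 * ((9*t^2 - 28 + 4/t^2) * s - (14*t^2 + 28) * s⁻¹
      + 9*t^2 * s⁻¹^3) := by
  rcases eq_or_ne s 0 with rfl | hs
  · simp [Gtorus_eq]
  · rw [Gtorus_eq]; field_simp; ring

lemma hasDerivAt_Gtorus_diag {t : ℝ} (ht : t ≠ 0) :
    HasDerivAt (fun s => Gtorus s t t) (-π^4 * ((9*t^2 - 5) * (t^2 - 1) / t^2)) t := by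
  simp_rw [Gtorus_apply_self_self _ t ht]
  have h := ((((hasDerivAt_id t).const_mul (9*t^2 - 28 + 4/t^2)).sub
    ((hasDerivAt_inv ht).const_mul (14*t^2 + 28))).add
    (((hasDerivAt_inv ht).pow 3).const_mul (9*t^2))).const_mul (-π^4)
  refine h.congr_deriv ?_
  simp only [Nat.cast_ofNat, inv_pow]
  field_simp
  ring

lemma Gtorus_diag (t : ℝ) : Gtorus t t t = π^4 * (42*t + 15/t - 9*t^3) := by
  rcases eq_or_ne t 0 with rfl | ht
  · simp [Gtorus_eq]
  · rw [Gtorus_apply_self_self t t ht]; field_simp; ring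

lemma deriv_Gtorus_diag_eq_zero {t : ℝ} (ht : t^2 = 1 ∨ t^2 = 5/9) :
    deriv (fun s => Gtorus s t t) t = 0 ∧
    deriv (fun s => Gtorus t s t) t = 0 ∧
    deriv (fun s => Gtorus t t s) t = 0 := by
  have ht0 : t ≠ 0 := by rintro rfl; norm_num at ht
  have h₁ : deriv (fun s => Gtorus s t t) t = 0 := by
    rw [(hasDerivAt_Gtorus_diag ht0).deriv]
    rcases ht with h | h <;> norm_num [h]
  refine ⟨h₁, ?_, ?_⟩
  · simpa only [Gtorus_swap₁₂ _ t t] using h₁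
  · simpa only [Gtorus_swap₁₃ _ t t] using h₁

/-- `(1,1,1)` and `(√(5/9),√(5/9),√(5/9))` are critical points of `G`, with values
`48π⁴` and `(64√5/3)π⁴`. -/
theorem stmt_5 :
    (deriv (fun s => Gtorus s 1 1) 1 = 0 ∧
     deriv (fun s => Gtorus 1 s 1) 1 = 0 ∧
     deriv (fun s => Gtorus 1 1 s) 1 = 0) ∧
    (let c := Real.sqrt (5/9)
     deriv (fun s => Gtorus s c c) c = 0 ∧
     deriv (fun s => Gtorus c s c) c = 0 ∧
     deriv (fun s => Gtorus c c s) c = 0) ∧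
    Gtorus 1 1 1 = 48*π^4 ∧
    Gtorus (Real.sqrt (5/9)) (Real.sqrt (5/9)) (Real.sqrt (5/9))
      = (64*Real.sqrt 5/3)*π^4 := by
  have hc2 : Real.sqrt (5/9) ^ 2 = 5/9 := Real.sq_sqrt (by norm_num)
  have hc : Real.sqrt (5/9) = Real.sqrt 5 / 3 := by
    rw [Real.sqrt_div' _ (by norm_num), show (9 : ℝ) = 3^2 by norm_num,
      Real.sqrt_sq (by norm_num)]
  refine ⟨deriv_Gtorus_diag_eq_zero (by norm_num), deriv_Gtorus_diag_eq_zero (Or.inr hc2),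
    by rw [Gtorus_diag]; ring, ?_⟩
  rw [Gtorus_diag, show 64 * Real.sqrt 5 / 3 = 64 * Real.sqrt (5/9) by rw [hc]; ring]
  field_simp
  linear_combination (-(27 + 9 * Real.sqrt (5/9) ^ 2)) * hc2
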